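/- Let d = 2^J and let Y ∈ ℝ^{d×d}. Define the quadtree vectorization T: ℝ^{d×d} → ℝ^{d²} recursively by splitting Y into four d/2 × d/2 blocks Z₁ (top-left), Z₂ (top-right), Z₃ (bottom-left), Z₄ (bottom-right) and setting T(Y) = concatenation (T(Z₁), T(Z₂), T(Z₃), T(Z₄)), with T the identity on 1×1 matrices. Then for any 2×2 kernels K₁,…,K_J, the iterated 2D stride-2 convolution K_J ⊛₂ ⋯ ⊛₂ K₁ ⊛₂ Y (a scalar) equals the iterated 1D stride-4 convolution K̃_J *₄ ⋯ *₄ K̃₁ *₄ T(Y), where K̃ = (K₁₁, K₁₂, K₂₁, K₂₂) for each kernel K. -/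

import Mathlib

open Finset

/-- zero-padded access to a finite matrix. -/
def padGet2 {d : ℕ} (X : Fin d → Fin d → ℝ) (i j : ℕ) : ℝ :=
  if h : i < d ∧ j < d then X ⟨i, h.1⟩ ⟨j, h.2⟩ else 0

/-- 1D stride-`t` convolution on zero-padded signals (0-based indexing). -/
def convN (s t : ℕ) (w : Fin s → ℝ) (x : ℕ → ℝ) (i : ℕ) : ℝ :=
  ∑ k : Fin s, w k * x (i * t + k.val)

/-- 2D stride-`t` convolution of `W ∈ ℝ^{s×s}` with a zero-padded image (0-based indexing). -/
def convN2 (s t : ℕ) (W : Fin s → Fin s → ℝ) (X : ℕ → ℕ → ℝ) (i j : ℕ) : ℝ :=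
  ∑ a : Fin s, ∑ b : Fin s, W a b * X (i * t + a.val) (j * t + b.val)

/-- row-major flattening of a `2×2` kernel: `K̃ = (K₁₁, K₁₂, K₂₁, K₂₂)`. -/
def flat (K : Fin 2 → Fin 2 → ℝ) : Fin 4 → ℝ := ![K 0 0, K 0 1, K 1 0, K 1 1]

/-- quadtree (hierarchical) vectorization `T : ℝ^{2^J × 2^J} → ℝ^{4^J}` (0-based): a `2^{J+1} ×
2^{J+1}` matrix is split into its four `2^J × 2^J` blocks `Z₁` (top-left), `Z₂` (top-right),
`Z₃` (bottom-left), `Z₄` (bottom-right), and `T(Y) = (T(Z₁), T(Z₂), T(Z₃), T(Z₄))`;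
`T` is the identity on `1×1` matrices. -/
def quad : (J : ℕ) → (ℕ → ℕ → ℝ) → ℕ → ℝ
  | 0, Y, _ => Y 0 0
  | J + 1, Y, p =>
      quad J (fun i j => Y (i + 2 ^ J * ((p / 4 ^ J) / 2)) (j + 2 ^ J * ((p / 4 ^ J) % 2)))
        (p % 4 ^ J)

/-- iterated 2D stride-2 convolutions: `K_j ⊛₂ ⋯ ⊛₂ K₁ ⊛₂ Y` (kernel `K 0` applied first). -/
def iter2 (K : ℕ → Fin 2 → Fin 2 → ℝ) (Y : ℕ → ℕ → ℝ) : ℕ → ℕ → ℕ → ℝ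
  | 0 => Y
  | j + 1 => convN2 2 2 (K j) (iter2 K Y j)

/-- iterated 1D stride-4 convolutions: `w_j *₄ ⋯ *₄ w₁ *₄ x` (filter `w 0` applied first). -/
def iter1 (w : ℕ → Fin 4 → ℝ) (x : ℕ → ℝ) : ℕ → ℕ → ℝ
  | 0 => x
  | j + 1 => convN 4 4 (w j) (iter1 w x j)

lemma shift1 (w : ℕ → Fin 4 → ℝ) : ∀ (j : ℕ) (x : ℕ → ℝ) (p : ℕ),
    iter1 w x j p = iter1 w (fun q => x (p * 4 ^ j + q)) j 0 := by
  intro j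
  induction j with
  | zero => intro x p; simp [iter1]
  | succ j ih =>
    intro x p
    simp only [iter1, convN, Nat.zero_mul, Nat.zero_add]
    refine Finset.sum_congr rfl fun k _ => ?_
    rw [ih x, ih (fun q => x (p * 4 ^ (j + 1) + q))]
    have : (fun q => x ((p * 4 + (k : ℕ)) * 4 ^ j + q))
        = fun q => x (p * 4 ^ (j + 1) + ((k : ℕ) * 4 ^ j + q)) := by
      funext q; congr 1; ring
    rw [this]

lemma iter1_congr (w : ℕ → Fin 4 → ℝ) : ∀ (j : ℕ) (x y : ℕ → ℝ),
    (∀ q < 4 ^ j, x q = y q) → iter1 w x j 0 = iter1 w y j 0 := by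
  intro j
  induction j with
  | zero => intro x y h; exact h 0 (by norm_num)
  | succ j ih =>
    intro x y h
    simp only [iter1, convN, Nat.zero_mul, Nat.zero_add]
    refine Finset.sum_congr rfl fun k _ => ?_
    congr 1
    rw [shift1, shift1 w j y]
    refine ih _ _ fun q hq => ?_
    have hk : (k : ℕ) < 4 := k.isLt
    refine h _ ?_
    have : (k : ℕ) * 4 ^ j + q < ((k : ℕ) + 1) * 4 ^ j := by
      rw [Nat.add_mul, Nat.one_mul]; omega
    calc (k : ℕ) * 4 ^ j + q < ((k : ℕ) + 1) * 4 ^ j := this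
      _ ≤ 4 * 4 ^ j := Nat.mul_le_mul_right _ (by omega)
      _ = 4 ^ (j + 1) := by ring

lemma shift2 (K : ℕ → Fin 2 → Fin 2 → ℝ) : ∀ (j : ℕ) (Y : ℕ → ℕ → ℝ) (i i' : ℕ),
    iter2 K Y j i i' = iter2 K (fun a b => Y (i * 2 ^ j + a) (i' * 2 ^ j + b)) j 0 0 := by
  intro j
  induction j with
  | zero => intro Y i i'; simp [iter2]
  | succ j ih =>
    intro Y i i'
    simp only [iter2, convN2, Nat.zero_mul, Nat.zero_add]
    refine Finset.sum_congr rfl fun a _ => Finset.sum_congr rfl fun b _ => ?_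
    rw [ih Y, ih (fun a b => Y (i * 2 ^ (j + 1) + a) (i' * 2 ^ (j + 1) + b))]
    have : (fun p q => Y ((i * 2 + (a : ℕ)) * 2 ^ j + p) ((i' * 2 + (b : ℕ)) * 2 ^ j + q))
        = fun p q => Y (i * 2 ^ (j + 1) + ((a : ℕ) * 2 ^ j + p))
            (i' * 2 ^ (j + 1) + ((b : ℕ) * 2 ^ j + q)) := by
      funext p q; congr 1 <;> ring
    rw [this]

lemma quad_succ_block (J k : ℕ) (Y : ℕ → ℕ → ℝ) (q : ℕ) (hq : q < 4 ^ J) :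
    quad (J + 1) Y (k * 4 ^ J + q)
      = quad J (fun i j => Y (i + 2 ^ J * (k / 2)) (j + 2 ^ J * (k % 2))) q := by
  have hpos : 0 < 4 ^ J := Nat.pow_pos (by norm_num)
  have h1 : (k * 4 ^ J + q) / 4 ^ J = k := by
    rw [Nat.add_comm, Nat.add_mul_div_right _ _ hpos, Nat.div_eq_of_lt hq, Nat.zero_add]
  have h2 : (k * 4 ^ J + q) % 4 ^ J = q := by
    rw [Nat.add_comm, Nat.add_mul_mod_self_right, Nat.mod_eq_of_lt hq]
  simp only [quad, h1, h2]

lemma main_lemma (K : ℕ → Fin 2 → Fin 2 → ℝ) : ∀ (J : ℕ) (Y : ℕ → ℕ → ℝ),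
    iter2 K Y J 0 0 = iter1 (fun j => flat (K j)) (quad J Y) J 0 := by
  intro J
  induction J with
  | zero => intro Y; simp [iter2, iter1, quad]
  | succ J ih =>
    intro Y
    have key : ∀ a b : ℕ, a < 2 → b < 2 →
        iter2 K Y J a b
          = iter1 (fun j => flat (K j)) (quad (J + 1) Y) J (2 * a + b) := by
      intro a b ha hb
      rw [shift2, ih, shift1 (fun j => flat (K j)) J (quad (J + 1) Y) (2 * a + b)]
      refine iter1_congr _ _ _ _ fun q hq => ?_
      rw [quad_succ_block _ _ _ _ hq]
      have hd : (2 * a + b) / 2 = a := by omega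
      have hm : (2 * a + b) % 2 = b := by omega
      rw [hd, hm]
      have : (fun i j => Y (a * 2 ^ J + i) (b * 2 ^ J + j))
          = fun i j => Y (i + 2 ^ J * a) (j + 2 ^ J * b) := by
        funext i j; congr 1 <;> ring
      rw [this]
    have k00 := key 0 0 (by norm_num) (by norm_num)
    have k01 := key 0 1 (by norm_num) (by norm_num)
    have k10 := key 1 0 (by norm_num) (by norm_num)
    have k11 := key 1 1 (by norm_num) (by norm_num)
    norm_num at k00 k01 k10 k11
    simp only [iter2, iter1, convN2, convN, Fin.sum_univ_two, Fin.sum_univ_four,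
      Fin.val_zero, Fin.val_one, Nat.zero_mul, Nat.zero_add, Nat.add_zero, flat,
      Matrix.cons_val_zero, Matrix.cons_val_one, Matrix.head_cons, Matrix.cons_val_two,
      Matrix.tail_cons, Matrix.cons_val_three, show ((3 : Fin 4) : ℕ) = 3 from rfl,
      show ((2 : Fin 4) : ℕ) = 2 from rfl]
    rw [k00, k01, k10, k11]
    simp only [flat]
    ring

/-- for `d = 2^J`, `Y ∈ ℝ^{d×d}` and `2×2` kernels `K₁,…,K_J`, the scalar
`K_J ⊛₂ ⋯ ⊛₂ K₁ ⊛₂ Y` equals the iterated 1D stride-4 convolution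
`K̃_J *₄ ⋯ *₄ K̃₁ *₄ T(Y)` of the flattened kernels with the quadtree vectorization of `Y`. -/
theorem stmt7 (J : ℕ) (K : ℕ → Fin 2 → Fin 2 → ℝ) (Y : Fin (2 ^ J) → Fin (2 ^ J) → ℝ) :
    iter2 K (padGet2 Y) J 0 0 = iter1 (fun j => flat (K j)) (quad J (padGet2 Y)) J 0 := by
  exact main_lemma K J (padGet2 Y)
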